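/- arXiv:2311.15105 — 2 statements merged into one kernel-verified Lean document; each statement's English description precedes it below -/
import Mathlib

section
/- Let B be a standard ℕ^p-graded algebra over a Noetherian local ring R, and for each i let I_i ⊂ B be an ideal generated by elements of degree e_i (the i-th standard basis vector). Let I = I_1 + ... + I_p. For t = (t_1,...,t_p) ∈ ℕ^p, v, n ∈ ℕ^p with v > t, and c = |v| - |t|, one has I^c I_1^{n_1}···I_p^{n_p} · [𝓗_t]_{v+n} = H_1^{v_1+n_1-t_1}···H_p^{v_p+n_p-t_p} [B]_t, where H_i ⊆ [B]_{e_i} generates I_i and 𝓗_t is the ideal generated by [B]_t. -/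
open Submodule

section AuxRS
variable {R B : Type*} [CommRing R] [CommRing B] [Algebra R B]

lemma aux_top_mul_le (K : Submodule R B) : K ≤ ⊤ * K := by
  intro x hx
  simpa using Submodule.mul_mem_mul (mem_top (x := (1:B))) hx

lemma aux_top_mul_top : (⊤ : Submodule R B) * ⊤ = ⊤ :=
  le_antisymm le_top (aux_top_mul_le ⊤)

lemma aux_mul_top_closed (N : Submodule R B) (b : B) {x : B} (hx : x ∈ (⊤ : Submodule R B) * N) :
    b * x ∈ (⊤ : Submodule R B) * N := by
  refine Submodule.mul_induction_on hx (fun a _ y hy => ?_) (fun y z hy hz => ?_)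
  · rw [← mul_assoc]; exact Submodule.mul_mem_mul (mem_top) hy
  · rw [mul_add]; exact add_mem hy hz

lemma aux_span_restrict (N : Submodule R B) :
    (Ideal.span (N : Set B)).restrictScalars R = (⊤ : Submodule R B) * N := by
  apply le_antisymm
  · intro x hx
    rw [Submodule.restrictScalars_mem] at hx
    refine Submodule.span_induction (fun y hy => ?_) (zero_mem _) (fun y z _ _ hy hz => add_mem hy hz)
      (fun b y _ hy => ?_) hx
    · simpa using Submodule.mul_mem_mul (mem_top (x := (1:B))) hy
    · exact aux_mul_top_closed N b hy
  · rw [Submodule.mul_le]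
    intro a _ y hy
    exact Ideal.mul_mem_left _ a (Ideal.subset_span hy)

lemma aux_mul_restrict (A C : Ideal B) :
    (A * C).restrictScalars R = A.restrictScalars R * C.restrictScalars R := by
  apply le_antisymm
  · intro x hx
    rw [Submodule.restrictScalars_mem] at hx
    exact Submodule.mul_induction_on hx (fun a ha b hb => Submodule.mul_mem_mul ha hb)
      (fun y z hy hz => add_mem hy hz)
  · rw [Submodule.mul_le]
    intro a ha c hc
    exact Ideal.mul_mem_mul ha hc

lemma aux_pow_restrict (A : Ideal B) (k : ℕ) :
    (A ^ k).restrictScalars R = (⊤ : Submodule R B) * (A.restrictScalars R) ^ k := by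
  induction k with
  | zero => simp [Ideal.one_eq_top]
  | succ k ih => rw [pow_succ, aux_mul_restrict, ih, pow_succ, mul_assoc]

lemma aux_sup_restrict (A C : Ideal B) :
    (A ⊔ C).restrictScalars R = A.restrictScalars R ⊔ C.restrictScalars R := by
  ext x
  rw [Submodule.restrictScalars_mem, Submodule.mem_sup, Submodule.mem_sup]
  simp only [Submodule.restrictScalars_mem]

lemma aux_sum_restrict {ι : Type*} (s : Finset ι) (A : ι → Ideal B) :
    (∑ i ∈ s, A i).restrictScalars R = ∑ i ∈ s, (A i).restrictScalars R := by
  induction s using Finset.cons_induction with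
  | empty => ext x; simp
  | cons a s h ih =>
    rw [Finset.sum_cons, Finset.sum_cons, Submodule.add_eq_sup, Submodule.add_eq_sup,
      aux_sup_restrict, ih]

lemma aux_prod_restrict {ι : Type*} (s : Finset ι) (A : ι → Ideal B) :
    (∏ i ∈ s, A i).restrictScalars R = (⊤ : Submodule R B) * ∏ i ∈ s, (A i).restrictScalars R := by
  induction s using Finset.cons_induction with
  | empty => simp [Ideal.one_eq_top]
  | cons a s h ih =>
    rw [Finset.prod_cons, Finset.prod_cons, aux_mul_restrict, ih]
    ring

lemma aux_sum_le {ι : Type*} (s : Finset ι) (f : ι → Submodule R B) (P : Submodule R B)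
    (h : ∀ i ∈ s, f i ≤ P) : ∑ i ∈ s, f i ≤ P := by
  induction s using Finset.cons_induction with
  | empty => simp
  | cons a s hs ih =>
    rw [Finset.sum_cons, Submodule.add_eq_sup]
    exact sup_le (h a (Finset.mem_cons_self a s)) (ih fun i hi => h i (Finset.mem_cons_of_mem hi))

lemma aux_pow_mono {M N : Submodule R B} (h : M ≤ N) (k : ℕ) : M ^ k ≤ N ^ k := by
  induction k with
  | zero => simp
  | succ k ih => rw [pow_succ, pow_succ]; exact mul_le_mul' ih h

lemma aux_prod_mono {ι : Type*} (s : Finset ι) (M N : ι → Submodule R B)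
    (h : ∀ i ∈ s, M i ≤ N i) : ∏ i ∈ s, M i ≤ ∏ i ∈ s, N i := by
  induction s using Finset.cons_induction with
  | empty => simp
  | cons a s hs ih =>
    rw [Finset.prod_cons, Finset.prod_cons]
    exact mul_le_mul' (h a (Finset.mem_cons_self a s))
      (ih fun i hi => h i (Finset.mem_cons_of_mem hi))

end AuxRS

section AuxGraded
variable {p : ℕ} {R B : Type*} [CommRing R] [CommRing B] [Algebra R B]
  (𝒜 : (Fin p → ℕ) → Submodule R B) [GradedAlgebra 𝒜]

lemma aux_mul_le_piece {M N : Submodule R B} {a b : Fin p → ℕ}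
    (hM : M ≤ 𝒜 a) (hN : N ≤ 𝒜 b) : M * N ≤ 𝒜 (a + b) :=
  Submodule.mul_le.2 fun _ hm _ hn => SetLike.mul_mem_graded (hM hm) (hN hn)

lemma aux_pow_le_piece {M : Submodule R B} {a : Fin p → ℕ} (hM : M ≤ 𝒜 a) (k : ℕ) :
    M ^ k ≤ 𝒜 (k • a) := by
  induction k with
  | zero => simpa using (Submodule.one_le).2 SetLike.GradedOne.one_mem
  | succ k ih =>
    rw [pow_succ, succ_nsmul]
    exact aux_mul_le_piece 𝒜 ih hM

lemma aux_prod_le_piece {ι : Type*} (s : Finset ι) (M : ι → Submodule R B) (d : ι → (Fin p → ℕ))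
    (h : ∀ i, M i ≤ 𝒜 (d i)) : ∏ i ∈ s, M i ≤ 𝒜 (∑ i ∈ s, d i) := by
  induction s using Finset.cons_induction with
  | empty => simpa using (Submodule.one_le).2 SetLike.GradedOne.one_mem
  | cons a s hs ih =>
    rw [Finset.prod_cons, Finset.sum_cons]
    exact aux_mul_le_piece 𝒜 (h a) ih

lemma aux_graded_inf_le {ι : Type*} (F : ι → Submodule R B) (d : ι → (Fin p → ℕ))
    (hF : ∀ k, F k ≤ 𝒜 (d k)) (w : Fin p → ℕ) :
    (⨆ k, F k) ⊓ 𝒜 w ≤ ⨆ k, ⨆ _ : d k = w, F k := by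
  intro x hx
  have hproj : GradedAlgebra.proj 𝒜 w x = x := by
    rw [GradedAlgebra.proj_apply, DirectSum.decompose_of_mem_same 𝒜 hx.2]
  have hle : (⨆ k, F k) ≤
      Submodule.comap (GradedAlgebra.proj 𝒜 w) (⨆ k, ⨆ _ : d k = w, F k) := by
    refine iSup_le fun k => fun y hy => ?_
    rw [Submodule.mem_comap]
    by_cases hk : d k = w
    · have : GradedAlgebra.proj 𝒜 w y = y := by
        rw [GradedAlgebra.proj_apply, ← hk, DirectSum.decompose_of_mem_same 𝒜 (hF k hy)]
      rw [this]
      exact Submodule.mem_iSup_of_mem k (Submodule.mem_iSup_of_mem hk hy)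
    · have : GradedAlgebra.proj 𝒜 w y = 0 := by
        rw [GradedAlgebra.proj_apply, DirectSum.decompose_of_mem_ne 𝒜 (hF k hy) hk]
      rw [this]; exact zero_mem _
  have hmem := hle hx.1
  rw [Submodule.mem_comap, hproj] at hmem
  exact hmem

lemma aux_deg (g : Fin p → ℕ) : ∑ i, g i • Pi.single i (1:ℕ) = g := by
  funext a
  simp [Finset.sum_apply, Pi.single_apply, mul_ite]

end AuxGraded

section AuxMulti
variable {p : ℕ} {R B : Type*} [CommRing R] [CommRing B] [Algebra R B]

lemma aux_single_le_sum (H : Fin p → Submodule R B) (i : Fin p) : H i ≤ ∑ k, H k := by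
  classical
  rw [← Finset.add_sum_erase Finset.univ H (Finset.mem_univ i), Submodule.add_eq_sup]
  exact le_sup_left

lemma aux_sum_pow_le (H : Fin p → Submodule R B) (c : ℕ) :
    (∑ i, H i) ^ c ≤ ⨆ j : {j : Fin p → ℕ // ∑ i, j i = c}, ∏ i, H i ^ (j.1 i) := by
  classical
  induction c with
  | zero =>
    rw [pow_zero]
    have : (∏ i, H i ^ ((0 : Fin p → ℕ) i)) = 1 := by simp
    exact this ▸ le_iSup (fun j : {j : Fin p → ℕ // ∑ i, j i = 0} => ∏ i, H i ^ (j.1 i))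
      ⟨0, by simp⟩
  | succ c ih =>
    rw [pow_succ]
    calc (∑ i, H i) ^ c * (∑ i, H i)
        ≤ (⨆ j : {j : Fin p → ℕ // ∑ i, j i = c}, ∏ i, H i ^ (j.1 i)) * (∑ i, H i) :=
          mul_le_mul' ih le_rfl
      _ = ⨆ j : {j : Fin p → ℕ // ∑ i, j i = c}, (∏ i, H i ^ (j.1 i)) * (∑ i, H i) :=
          Submodule.iSup_mul _ _
      _ ≤ ⨆ j : {j : Fin p → ℕ // ∑ i, j i = c + 1}, ∏ i, H i ^ (j.1 i) := by
          refine iSup_le fun j => ?_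
          rw [Finset.mul_sum]
          refine aux_sum_le _ _ _ fun i _ => ?_
          have hkey : (∏ k, H k ^ (Function.update j.1 i (j.1 i + 1) k))
              = (∏ k, H k ^ (j.1 k)) * H i := by
            have hupd : ∀ k, H k ^ (Function.update j.1 i (j.1 i + 1) k)
                = Function.update (fun k => H k ^ (j.1 k)) i (H i ^ (j.1 i + 1)) k := by
              intro k
              by_cases hk : k = i
              · subst hk; simp
              · rw [Function.update_of_ne hk, Function.update_of_ne hk]
            rw [Finset.prod_congr rfl (fun k _ => hupd k),
              Finset.prod_update_of_mem (Finset.mem_univ i),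
              ← Finset.mul_prod_erase Finset.univ (fun k => H k ^ (j.1 k)) (Finset.mem_univ i),
              pow_succ, Finset.erase_eq]
            ring
          have hsum : ∑ k, Function.update j.1 i (j.1 i + 1) k = c + 1 := by
            rw [Finset.sum_update_of_mem (Finset.mem_univ i)]
            have h2 := Finset.add_sum_erase Finset.univ j.1 (Finset.mem_univ i)
            rw [Finset.erase_eq] at h2
            have h3 := j.2
            omega
          exact hkey ▸ le_iSup (fun j : {j : Fin p → ℕ // ∑ i, j i = c + 1} => ∏ i, H i ^ (j.1 i))
            ⟨Function.update j.1 i (j.1 i + 1), hsum⟩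

end AuxMulti

/-- Let `B` be a standard `ℕ^p`-graded algebra over a Noetherian local
ring `R`, with grading `𝒜`.  For each `i` let `H i ⊆ [B]_{e_i}` be a nonzero `R`-submodule
generating the ideal `I i`, and let `Isum = I 1 + ⋯ + I p`.  For `t v n ∈ ℕ^p` with `v > t`
and `c = |v| - |t|`, the degree-`(v+n)` graded piece of the ideal
`Isum^c · I₁^{n₁} ⋯ I_p^{n_p} · 𝓗_t` equals
`H₁^{v₁+n₁-t₁} ⋯ H_p^{v_p+n_p-t_p} · [B]_t`, where `𝓗_t` is the ideal generated by the
graded piece `[B]_t`. -/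
theorem relative_mixed_graded_piece_eq
    {p : ℕ} (R B : Type*) [CommRing R] [IsNoetherianRing R] [IsLocalRing R]
    [CommRing B] [Algebra R B]
    (𝒜 : (Fin p → ℕ) → Submodule R B) [GradedAlgebra 𝒜]
    -- `B` is standard: every graded piece is the product of powers of the degree-`eᵢ` pieces
    (hstd : ∀ v : Fin p → ℕ, 𝒜 v = ∏ i, 𝒜 (Pi.single i 1) ^ v i)
    (H : Fin p → Submodule R B)
    (hH : ∀ i, H i ≤ 𝒜 (Pi.single i 1)) (hHne : ∀ i, H i ≠ ⊥)
    (I : Fin p → Ideal B) (hI : ∀ i, I i = Ideal.span (H i : Set B))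
    (Isum : Ideal B) (hIsum : Isum = ∑ i, I i)
    (t v n : Fin p → ℕ) (hvt : ∀ i, t i < v i)
    (c : ℕ) (hc : c = (∑ i, v i) - (∑ i, t i))
    (Ht : Ideal B) (hHt : Ht = Ideal.span ((𝒜 t : Submodule R B) : Set B)) :
    (Isum ^ c * (∏ i, I i ^ n i) * Ht).restrictScalars R ⊓ 𝒜 (v + n)
      = (∏ i, H i ^ (v i + n i - t i)) * 𝒜 t := by
  classical
  -- basic arithmetic facts
  have hexp : ∀ i, v i + n i - t i = (v i - t i) + n i := fun i => by have := hvt i; omega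
  have hcc : (∑ i, (v i - t i)) = c := by
    have h1 : (∑ i, v i) = ∑ i, ((v i - t i) + t i) :=
      Finset.sum_congr rfl fun i _ => by have := hvt i; omega
    rw [Finset.sum_add_distrib] at h1
    have h2 : (∑ i, t i) ≤ ∑ i, v i := Finset.sum_le_sum fun i _ => (hvt i).le
    omega
  -- restrictScalars of the ideals
  have hIr : ∀ i, (I i).restrictScalars R = (⊤ : Submodule R B) * H i := fun i => by
    rw [hI i, aux_span_restrict]
  have hIsumr : Isum.restrictScalars R = (⊤ : Submodule R B) * ∑ i, H i := by
    rw [hIsum, aux_sum_restrict]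
    rw [Finset.mul_sum]
    exact Finset.sum_congr rfl fun i _ => hIr i
  have hHtr : Ht.restrictScalars R = (⊤ : Submodule R B) * 𝒜 t := by
    rw [hHt, aux_span_restrict]
  -- the key factorization of the ideal as an `R`-submodule
  have hJ : (Isum ^ c * (∏ i, I i ^ n i) * Ht).restrictScalars R
      = (Isum ^ c).restrictScalars R * (∏ i, I i ^ n i).restrictScalars R
        * Ht.restrictScalars R := by
    rw [aux_mul_restrict, aux_mul_restrict]
  refine le_antisymm ?_ ?_
  · -- hard direction
    -- Step 1: bound the ideal by ⊤ * KK
    have hJle : (Isum ^ c * (∏ i, I i ^ n i) * Ht).restrictScalars R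
        ≤ (⊤ : Submodule R B) *
          ((∑ i, H i) ^ c * (∏ i, H i ^ n i) * 𝒜 t) := by
      rw [hJ, aux_pow_restrict, hIsumr, aux_prod_restrict, hHtr]
      have b1 : (⊤ : Submodule R B) * ((⊤ : Submodule R B) * ∑ i, H i) ^ c
          ≤ (⊤ : Submodule R B) * (∑ i, H i) ^ c := by
        rw [mul_pow, ← mul_assoc]
        exact mul_le_mul' le_top le_rfl
      have b2 : (⊤ : Submodule R B) * ∏ i, ((I i) ^ n i).restrictScalars R
          ≤ (⊤ : Submodule R B) * ∏ i, H i ^ n i := by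
        have b2' : (∏ i, ((I i) ^ n i).restrictScalars R)
            ≤ (⊤ : Submodule R B) * ∏ i, H i ^ n i := by
          have : ∀ i, ((I i) ^ n i).restrictScalars R
              ≤ (⊤ : Submodule R B) * H i ^ n i := by
            intro i
            rw [aux_pow_restrict, hIr i, mul_pow, ← mul_assoc]
            exact mul_le_mul' le_top le_rfl
          calc (∏ i, ((I i) ^ n i).restrictScalars R)
              ≤ ∏ i, ((⊤ : Submodule R B) * H i ^ n i) :=
                aux_prod_mono _ _ _ fun i _ => this i
            _ = (∏ _i : Fin p, (⊤ : Submodule R B)) * ∏ i, H i ^ n i :=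
                Finset.prod_mul_distrib
            _ ≤ (⊤ : Submodule R B) * ∏ i, H i ^ n i :=
                mul_le_mul' le_top le_rfl
        calc (⊤ : Submodule R B) * ∏ i, ((I i) ^ n i).restrictScalars R
            ≤ (⊤ : Submodule R B) * ((⊤ : Submodule R B) * ∏ i, H i ^ n i) :=
              mul_le_mul' le_rfl b2'
          _ = ((⊤ : Submodule R B) * (⊤ : Submodule R B)) * ∏ i, H i ^ n i := by ring
          _ = (⊤ : Submodule R B) * ∏ i, H i ^ n i := by rw [aux_top_mul_top]
      calc (⊤ : Submodule R B) * ((⊤ : Submodule R B) * ∑ i, H i) ^ c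
            * ((⊤ : Submodule R B) * ∏ i, ((I i) ^ n i).restrictScalars R)
            * ((⊤ : Submodule R B) * 𝒜 t)
          ≤ ((⊤ : Submodule R B) * (∑ i, H i) ^ c)
            * ((⊤ : Submodule R B) * ∏ i, H i ^ n i)
            * ((⊤ : Submodule R B) * 𝒜 t) :=
            mul_le_mul' (mul_le_mul' b1 b2) le_rfl
        _ = ((⊤ : Submodule R B) * (⊤ : Submodule R B) * (⊤ : Submodule R B))
            * ((∑ i, H i) ^ c * (∏ i, H i ^ n i) * 𝒜 t) := by ring
        _ = (⊤ : Submodule R B) * ((∑ i, H i) ^ c * (∏ i, H i ^ n i) * 𝒜 t) := by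
            rw [aux_top_mul_top, aux_top_mul_top]
    -- Step 2: bound ⊤ * KK by a supremum of homogeneous pieces
    set F : ((Fin p → ℕ) × {j : Fin p → ℕ // ∑ i, j i = c}) → Submodule R B :=
      fun q => 𝒜 q.1 * ((∏ i, H i ^ (q.2.1 i)) * ((∏ i, H i ^ n i) * 𝒜 t)) with hF
    have hKK : (⊤ : Submodule R B) * ((∑ i, H i) ^ c * (∏ i, H i ^ n i) * 𝒜 t)
        ≤ ⨆ q, F q := by
      have htop : (⊤ : Submodule R B) = ⨆ u : Fin p → ℕ, 𝒜 u :=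
        ((DirectSum.Decomposition.isInternal 𝒜).submodule_iSup_eq_top).symm
      rw [htop, Submodule.iSup_mul]
      refine iSup_le fun u => ?_
      have hin : (∑ i, H i) ^ c * (∏ i, H i ^ n i) * 𝒜 t
          ≤ ⨆ j : {j : Fin p → ℕ // ∑ i, j i = c},
              (∏ i, H i ^ (j.1 i)) * ((∏ i, H i ^ n i) * 𝒜 t) := by
        rw [mul_assoc]
        calc (∑ i, H i) ^ c * ((∏ i, H i ^ n i) * 𝒜 t)
            ≤ (⨆ j : {j : Fin p → ℕ // ∑ i, j i = c}, ∏ i, H i ^ (j.1 i))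
                * ((∏ i, H i ^ n i) * 𝒜 t) :=
              mul_le_mul' (aux_sum_pow_le H c) le_rfl
          _ = ⨆ j : {j : Fin p → ℕ // ∑ i, j i = c},
                (∏ i, H i ^ (j.1 i)) * ((∏ i, H i ^ n i) * 𝒜 t) :=
              Submodule.iSup_mul _ _
      calc 𝒜 u * ((∑ i, H i) ^ c * (∏ i, H i ^ n i) * 𝒜 t)
          ≤ 𝒜 u * ⨆ j : {j : Fin p → ℕ // ∑ i, j i = c},
              (∏ i, H i ^ (j.1 i)) * ((∏ i, H i ^ n i) * 𝒜 t) :=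
            mul_le_mul' le_rfl hin
        _ = ⨆ j : {j : Fin p → ℕ // ∑ i, j i = c},
              𝒜 u * ((∏ i, H i ^ (j.1 i)) * ((∏ i, H i ^ n i) * 𝒜 t)) :=
            Submodule.mul_iSup _ _
        _ ≤ ⨆ q, F q := iSup_le fun j => le_iSup F (u, j)
    -- homogeneity of the pieces
    have hprodH : ∀ g : Fin p → ℕ, (∏ i, H i ^ g i) ≤ 𝒜 g := by
      intro g
      have := aux_prod_le_piece 𝒜 Finset.univ (fun i => H i ^ g i)
        (fun i => g i • Pi.single i 1) (fun i => aux_pow_le_piece 𝒜 (hH i) (g i))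
      rwa [aux_deg] at this
    have hdeg : ∀ q, F q ≤ 𝒜 (q.1 + (q.2.1 + (n + t))) := by
      intro q
      exact aux_mul_le_piece 𝒜 le_rfl
        (aux_mul_le_piece 𝒜 (hprodH q.2.1)
          (aux_mul_le_piece 𝒜 (hprodH n) le_rfl))
    -- Step 3: take the graded piece and apply the pigeonhole principle
    have hfin := aux_graded_inf_le 𝒜 F (fun q => q.1 + (q.2.1 + (n + t))) hdeg (v + n)
    refine le_trans (inf_le_inf_right (𝒜 (v + n)) (hJle.trans hKK)) (hfin.trans ?_)
    refine iSup_le fun q => iSup_le fun hq => ?_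
    obtain ⟨u, j⟩ := q
    -- pointwise consequences of the degree equation
    have hpt : ∀ i, u i + (j.1 i + (n i + t i)) = v i + n i := by
      intro i
      have := congrFun hq i
      simpa using this
    have hu0 : u = 0 := by
      have hsumeq : (∑ i, (u i + (j.1 i + (n i + t i)))) = ∑ i, (v i + n i) :=
        Finset.sum_congr rfl fun i _ => hpt i
    
      simp only [Finset.sum_add_distrib] at hsumeq
      have hj := j.2
      have h2 : (∑ i, t i) ≤ ∑ i, v i := Finset.sum_le_sum fun i _ => (hvt i).le
      have hu : (∑ i, u i) = 0 := by omega
      funext i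
      exact Finset.sum_eq_zero_iff.1 hu i (Finset.mem_univ i)
    have hjv : ∀ i, j.1 i = v i - t i := by
      intro i
      have h1 := hpt i
      have h2 : u i = 0 := by rw [hu0]; rfl
      have := hvt i
      omega
    -- now compute the remaining piece
    have hprod_eq : (∏ i, H i ^ (j.1 i)) = ∏ i, H i ^ (v i - t i) :=
      Finset.prod_congr rfl fun i _ => by rw [hjv i]
    have hA0t : 𝒜 0 * 𝒜 t ≤ 𝒜 t := by
      have := aux_mul_le_piece 𝒜 (le_refl (𝒜 0)) (le_refl (𝒜 t))
      rwa [zero_add] at this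
    have hfinal : (∏ i, H i ^ (v i - t i)) * (∏ i, H i ^ n i)
        = ∏ i, H i ^ (v i + n i - t i) := by
      rw [← Finset.prod_mul_distrib]
      exact Finset.prod_congr rfl fun i _ => by rw [← pow_add, ← hexp i]
    rw [hF]
    simp only [hu0, hprod_eq]
    calc 𝒜 0 * ((∏ i, H i ^ (v i - t i)) * ((∏ i, H i ^ n i) * 𝒜 t))
        = ((∏ i, H i ^ (v i - t i)) * (∏ i, H i ^ n i)) * (𝒜 0 * 𝒜 t) := by ring
      _ ≤ ((∏ i, H i ^ (v i - t i)) * (∏ i, H i ^ n i)) * 𝒜 t :=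
          mul_le_mul' le_rfl hA0t
      _ = (∏ i, H i ^ (v i + n i - t i)) * 𝒜 t := by rw [hfinal]
  · -- easy direction
    refine le_inf ?_ ?_
    · -- contained in the ideal
      have e1 : (∏ i, H i ^ (v i - t i)) ≤ (Isum ^ c).restrictScalars R := by
        have hH1 : ∀ i, H i ≤ Isum.restrictScalars R := by
          intro i
          rw [hIsumr]
          exact le_trans (aux_single_le_sum H i) (aux_top_mul_le _)
        calc (∏ i, H i ^ (v i - t i))
            ≤ ∏ i, (Isum.restrictScalars R) ^ (v i - t i) :=
              aux_prod_mono _ _ _ fun i _ => aux_pow_mono (hH1 i) _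
          _ = (Isum.restrictScalars R) ^ (∑ i, (v i - t i)) :=
              Finset.prod_pow_eq_pow_sum _ _ _
          _ = (Isum.restrictScalars R) ^ c := by rw [hcc]
          _ ≤ (Isum ^ c).restrictScalars R := by
              rw [aux_pow_restrict]; exact aux_top_mul_le _
      have e2 : (∏ i, H i ^ n i) ≤ (∏ i, I i ^ n i).restrictScalars R := by
        have : ∀ i, H i ^ n i ≤ ((I i) ^ n i).restrictScalars R := by
          intro i
          have h1 : H i ≤ (I i).restrictScalars R := by
            rw [hIr i]; exact aux_top_mul_le _
          exact le_trans (aux_pow_mono h1 _) (by rw [aux_pow_restrict]; exact aux_top_mul_le _)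
        calc (∏ i, H i ^ n i)
            ≤ ∏ i, ((I i) ^ n i).restrictScalars R := aux_prod_mono _ _ _ fun i _ => this i
          _ ≤ (∏ i, I i ^ n i).restrictScalars R := by
              rw [aux_prod_restrict]; exact aux_top_mul_le _
      have e3 : 𝒜 t ≤ Ht.restrictScalars R := by
        rw [hHtr]; exact aux_top_mul_le _
      have hsplit : (∏ i, H i ^ (v i + n i - t i)) * 𝒜 t
          = ((∏ i, H i ^ (v i - t i)) * (∏ i, H i ^ n i)) * 𝒜 t := by
        congr 1
        rw [← Finset.prod_mul_distrib]
        exact Finset.prod_congr rfl fun i _ => by rw [← pow_add, ← hexp i]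
      rw [hsplit, hJ]
      exact mul_le_mul' (mul_le_mul' e1 e2) e3
    · -- contained in the graded piece
      have h1 : (∏ i, H i ^ (v i + n i - t i)) ≤ 𝒜 (fun i => v i + n i - t i) := by
        have := aux_prod_le_piece 𝒜 Finset.univ (fun i => H i ^ (v i + n i - t i))
          (fun i => (v i + n i - t i) • Pi.single i 1)
          (fun i => aux_pow_le_piece 𝒜 (hH i) _)
        rwa [aux_deg (fun i => v i + n i - t i)] at this
      have h2 : ((fun i => v i + n i - t i) + t) = v + n := by
        funext i
        simp only [Pi.add_apply]
        have := hvt i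
        omega
      have := aux_mul_le_piece 𝒜 h1 (le_refl (𝒜 t))
      rwa [h2] at this
end

section
/- Let A ⊆ B be an inclusion of standard ℕ^2-graded algebras over a field k given by A = k[x_1,x_2,y_1,y_2] ↪ B = k[x_1,x_2,x_3,y_1,y_2,y_3]/(x_3·(y_1,y_2,y_3), y_3·(x_1,x_2,x_3)) with deg(x_i) = (1,0), deg(y_i) = (0,1). Then B/(0 :_B B_{++}) ≅ B/(x_3,y_3) ≅ k[x_1,x_2,y_1,y_2], the induced morphism BiProj(B) → BiProj(A) = P^1 × P^1 is an isomorphism, yet the ring extension A ⊆ B is not integral (x_3 is not integral over A). -/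
/-! The substitution `x₃, y₃ ↦ 0` kills every relation of `B`, so it descends to a retraction
`ψ : B → k[x₁,x₂,y₁,y₂]` of `A → B`; this makes `A → B` injective, and since `B` is generated by
the `xᵢ, yⱼ`, the kernel of `ψ` is `(x₃, y₃)`. An element `b` annihilating `B₊₊` kills `x₁y₁`, so
`ψ(b)·x₁y₁ = 0` in the domain `k[x₁,x₂,y₁,y₂]` and `ψ(b) = 0`; conversely `x₃` and `y₃` kill
`B₊₊` by the relations. Finally `x₃ ↦ T`, all other variables `↦ 0`, also kills the
relations and sends `A` into the constants of `k[T]`, so a monic equation for `x₃` over `A` would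
give a nonzero monic polynomial over `k` vanishing at `T`. -/

open Polynomial in
theorem not_isIntegral_of_map_eq_X {R B K : Type*} [CommRing R] [CommRing B] [Algebra R B]
    [CommRing K] [Nontrivial K] (θ : B →+* K[X])
    (hR : ∀ r : R, θ (algebraMap R B r) ∈ Set.range C) {b : B} (hb : θ b = X) :
    ¬ IsIntegral R b := by
  rintro ⟨P, hmonic, hP⟩
  let g : R →+* K := constantCoeff.comp (θ.comp (algebraMap R B))
  have hg : C.comp g = θ.comp (algebraMap R B) := RingHom.ext fun r => by
    obtain ⟨c, hc⟩ := hR r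
    simp [g, ← hc]
  have hPg : P.map g = 0 := by
    simpa [hom_eval₂, ← hg, hb, ← eval₂_map] using congrArg θ hP
  exact (hmonic.map g).ne_zero hPg

theorem AlgHom.ker_eq_of_comp_eq_id_mod {R A C : Type*} [CommRing R] [CommRing A]
    [CommRing C] [Algebra R A] [Algebra R C] (f : A →ₐ[R] C) (g : C →ₐ[R] A) {J : Ideal A}
    (hJ : J ≤ RingHom.ker f)
    (hgf : (Ideal.Quotient.mkₐ R J).comp (g.comp f) = Ideal.Quotient.mkₐ R J) :
    RingHom.ker f = J := by
  refine le_antisymm (fun a ha => ?_) hJ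
  rw [← Ideal.Quotient.eq_zero_iff_mem, ← Ideal.Quotient.mkₐ_eq_mk R, ← hgf]
  simp [(RingHom.mem_ker).mp ha]

open MvPolynomial

section X3Y3Example

-- `X 0, …, X 5` are `x₁, x₂, x₃, y₁, y₂, y₃`, and names refer to the latter.

variable (k : Type*) [Field k]

def x3y3Relations : Set (MvPolynomial (Fin 6) k) :=
  {X 2 * X 3, X 2 * X 4, X 2 * X 5, X 5 * X 0, X 5 * X 1, X 5 * X 2}

noncomputable def killX3Y3 : MvPolynomial (Fin 6) k →ₐ[k] MvPolynomial (Fin 4) k :=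
  aeval ![X 0, X 1, 0, X 2, X 3, 0]

noncomputable def onlyX3 : MvPolynomial (Fin 6) k →ₐ[k] Polynomial k :=
  aeval (Pi.single 2 Polynomial.X)

theorem span_x3y3Relations_le_ker_killX3Y3 :
    Ideal.span (x3y3Relations k) ≤ RingHom.ker (killX3Y3 k).toRingHom := by
  rw [Ideal.span_le]
  rintro p (rfl | rfl | rfl | rfl | rfl | rfl) <;> simp [killX3Y3]

theorem span_x3y3Relations_le_ker_onlyX3 :
    Ideal.span (x3y3Relations k) ≤ RingHom.ker (onlyX3 k).toRingHom := by
  rw [Ideal.span_le]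
  rintro p (rfl | rfl | rfl | rfl | rfl | rfl) <;> simp [onlyX3]

variable {k} {B : Type*} [CommRing B] [Algebra k B] (π : MvPolynomial (Fin 6) k →ₐ[k] B)

theorem map_x3_mul_map_y_eq_zero
    (hker : RingHom.ker π.toRingHom = Ideal.span (x3y3Relations k))
    {j : Fin 6} (hj : j ∈ ({3, 4, 5} : Set (Fin 6))) : π (X 2) * π (X j) = 0 := by
  rw [← map_mul]
  refine (RingHom.mem_ker (f := π.toRingHom)).mp (hker ▸ Ideal.subset_span ?_)
  rcases hj with rfl | rfl | rfl <;> simp [x3y3Relations]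

theorem map_y3_mul_map_x_eq_zero
    (hker : RingHom.ker π.toRingHom = Ideal.span (x3y3Relations k))
    {i : Fin 6} (hi : i ∈ ({0, 1, 2} : Set (Fin 6))) : π (X 5) * π (X i) = 0 := by
  rw [← map_mul]
  refine (RingHom.mem_ker (f := π.toRingHom)).mp (hker ▸ Ideal.subset_span ?_)
  rcases hi with rfl | rfl | rfl <;> simp [x3y3Relations]

theorem span_x3_y3_le_colon
    (hker : RingHom.ker π.toRingHom = Ideal.span (x3y3Relations k)) :
    Ideal.span {π (X 2), π (X 5)} ≤ Submodule.colon (⊥ : Ideal B)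
      (Ideal.span (Set.image2 (fun i j => π (X i * X j))
        ({0, 1, 2} : Set (Fin 6)) ({3, 4, 5} : Set (Fin 6))) : Set B) := by
  rw [Ideal.span_le, Ideal.colon_span]
  rintro _ (rfl | rfl) <;> rw [SetLike.mem_coe, Submodule.mem_colon] <;>
    rintro _ ⟨i, hi, j, hj, rfl⟩ <;> simp only [Submodule.mem_bot, smul_eq_mul, map_mul]
  · rw [mul_left_comm, map_x3_mul_map_y_eq_zero π hker hj, mul_zero]
  · rw [← mul_assoc, map_y3_mul_map_x_eq_zero π hker hi, zero_mul]

theorem colon_le_ker_of_comp_eq_killX3Y3 {ψ : B →ₐ[k] MvPolynomial (Fin 4) k}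
    (hψ : ψ.comp π = killX3Y3 k) :
    Submodule.colon (⊥ : Ideal B)
      (Ideal.span (Set.image2 (fun i j => π (X i * X j))
        ({0, 1, 2} : Set (Fin 6)) ({3, 4, 5} : Set (Fin 6))) : Set B) ≤ RingHom.ker ψ := by
  intro b hb
  have hx1y1 : π (X 0 * X 3) ∈ Ideal.span (Set.image2 (fun i j => π (X i * X j))
      ({0, 1, 2} : Set (Fin 6)) ({3, 4, 5} : Set (Fin 6))) :=
    Ideal.subset_span ⟨0, by simp, 3, by simp, rfl⟩
  have hb0 : b * π (X 0 * X 3) = 0 := Submodule.mem_colon.mp hb _ hx1y1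
  have hψb : ψ b * (X 0 * X 2) = 0 := by
    simpa [← AlgHom.comp_apply, hψ, killX3Y3] using congrArg ψ hb0
  exact (mul_eq_zero.mp hψb).resolve_right (mul_ne_zero (X_ne_zero _) (X_ne_zero _))

theorem comp_aeval_eq_id {ψ : B →ₐ[k] MvPolynomial (Fin 4) k} (hψ : ψ.comp π = killX3Y3 k) :
    ψ.comp (aeval ![π (X 0), π (X 1), π (X 3), π (X 4)]) = AlgHom.id k _ := by
  refine algHom_ext fun i => ?_
  fin_cases i <;> simp [← AlgHom.comp_apply, hψ, killX3Y3]

theorem ker_eq_span_x3_y3 (hπ : Function.Surjective π) {ψ : B →ₐ[k] MvPolynomial (Fin 4) k}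
    (hψ : ψ.comp π = killX3Y3 k) :
    RingHom.ker ψ = Ideal.span {π (X 2), π (X 5)} := by
  have hX2 : Ideal.Quotient.mk (Ideal.span {π (X 2), π (X 5)}) (π (X 2)) = 0 :=
    Ideal.Quotient.eq_zero_iff_mem.mpr (Ideal.subset_span (by simp))
  have hX5 : Ideal.Quotient.mk (Ideal.span {π (X 2), π (X 5)}) (π (X 5)) = 0 :=
    Ideal.Quotient.eq_zero_iff_mem.mpr (Ideal.subset_span (by simp))
  refine AlgHom.ker_eq_of_comp_eq_id_mod ψ (aeval ![π (X 0), π (X 1), π (X 3), π (X 4)])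
    ?_ ((AlgHom.cancel_right hπ).mp (algHom_ext fun i => ?_))
  · rw [Ideal.span_le]
    rintro _ (rfl | rfl) <;> simp [← AlgHom.comp_apply, hψ, killX3Y3]
  · fin_cases i <;> simp [← AlgHom.comp_apply, hψ, killX3Y3, hX2, hX5]

theorem comp_aeval_eq_C_comp_constantCoeff {θ : B →ₐ[k] Polynomial k}
    (hθ : θ.comp π = onlyX3 k) :
    (θ.comp (aeval ![π (X 0), π (X 1), π (X 3), π (X 4)])).toRingHom =
      Polynomial.C.comp constantCoeff := by
  refine ringHom_ext (fun a => by simp) fun i => ?_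
  fin_cases i <;> simp [← AlgHom.comp_apply, hθ, onlyX3]

end X3Y3Example

/-- Let `k` be a field and
`B = k[x₁,x₂,x₃,y₁,y₂,y₃]/(x₃·(y₁,y₂,y₃), y₃·(x₁,x₂,x₃))`, a standard `ℕ²`-graded
`k`-algebra with `deg xᵢ = (1,0)`, `deg yᵢ = (0,1)`, containing
`A = k[x₁,x₂,y₁,y₂]`.  Then `B/(0 :_B B₊₊) ≅ B/(x₃,y₃) ≅ k[x₁,x₂,y₁,y₂]` (so the induced
morphism `BiProj(B) → BiProj(A) = ℙ¹ × ℙ¹` is an isomorphism), the natural map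
`A → B` is injective, and yet the extension `A ⊆ B` is not integral: `x₃` is not
integral over `A`.

Here the variables `x₁,x₂,x₃,y₁,y₂,y₃` are `X 0, X 1, X 2, X 3, X 4, X 5` and `B₊₊` is
the ideal generated by all products `xᵢ·yⱼ`. -/
theorem biproj_iso_but_not_integral
    (k : Type*) [Field k]
    (B : Type*) [CommRing B] [Algebra k B]
    (π : MvPolynomial (Fin 6) k →ₐ[k] B) (hπ : Function.Surjective π)
    (hker : RingHom.ker π.toRingHom = Ideal.span
      ({X 2 * X 3, X 2 * X 4, X 2 * X 5, X 5 * X 0, X 5 * X 1, X 5 * X 2} :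
        Set (MvPolynomial (Fin 6) k)))
    -- the irrelevant ideal `B₊₊`, generated by the products `xᵢ yⱼ`
    (Bpp : Ideal B)
    (hBpp : Bpp = Ideal.span
      (Set.image2 (fun i j => π (X i * X j))
        ({0, 1, 2} : Set (Fin 6)) ({3, 4, 5} : Set (Fin 6))))
    -- the inclusion `A = k[x₁,x₂,y₁,y₂] → B`
    (φ : MvPolynomial (Fin 4) k →ₐ[k] B)
    (hφ : φ = MvPolynomial.aeval ![π (X 0), π (X 1), π (X 3), π (X 4)]) :
    -- `B/(0 :_B B₊₊) ≅ B/(x₃,y₃)`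
    Nonempty ((B ⧸ Submodule.colon (⊥ : Ideal B) Bpp)
        ≃ₐ[k] (B ⧸ Ideal.span ({π (X 2), π (X 5)} : Set B))) ∧
      -- `B/(x₃,y₃) ≅ k[x₁,x₂,y₁,y₂]`
      Nonempty ((B ⧸ Ideal.span ({π (X 2), π (X 5)} : Set B))
        ≃ₐ[k] MvPolynomial (Fin 4) k) ∧
      -- `A → B` is injective
      Function.Injective φ ∧
      -- `x₃` is not integral over `A`
      ¬ IsIntegral (↥φ.range) (π (X 2)) := by
  subst hBpp hφ
  let ψ := π.liftOfSurjective hπ (killX3Y3 k) (hker ▸ span_x3y3Relations_le_ker_killX3Y3 k)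
  let θ := π.liftOfSurjective hπ (onlyX3 k) (hker ▸ span_x3y3Relations_le_ker_onlyX3 k)
  have hψ : ψ.comp π = killX3Y3 k := π.liftOfSurjective_comp ..
  have hθ : θ.comp π = onlyX3 k := π.liftOfSurjective_comp ..
  have hψφ : Function.LeftInverse ψ (aeval ![π (X 0), π (X 1), π (X 3), π (X 4)]) :=
    DFunLike.congr_fun (comp_aeval_eq_id π hψ)
  have hψ_ker := ker_eq_span_x3_y3 π hπ hψ
  refine ⟨⟨Ideal.quotientEquivAlgOfEq k ?_⟩,
    ⟨(Ideal.quotientEquivAlgOfEq k hψ_ker.symm).trans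
      (Ideal.quotientKerAlgEquivOfSurjective hψφ.surjective)⟩, hψφ.injective,
    not_isIntegral_of_map_eq_X θ.toRingHom ?_ ?_⟩
  · exact le_antisymm (hψ_ker ▸ colon_le_ker_of_comp_eq_killX3Y3 π hψ)
      (span_x3_y3_le_colon π hker)
  · rintro ⟨_, q, rfl⟩
    exact ⟨_, (DFunLike.congr_fun (comp_aeval_eq_C_comp_constantCoeff π hθ) q).symm⟩
  · simpa [onlyX3] using DFunLike.congr_fun hθ (X 2)
end
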